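/- Let (Ω, P) be a finite probability space, let S : Ω → {0,1} satisfy P(S=0) = P(S=1) = 1/2, let X : Ω → α with α finite, and let c : α → {0,1} be any classifier. Then |P(c(X) = 1 | S = 0) − P(c(X) = 1 | S = 1)| ≤ √(2 · I(X ; S)). -/

import Mathlib

open Finset

open Classical in
/-- Probability of an event on a finite probability space given by a weight function `P`. -/
noncomputable def pr {Ω : Type*} [Fintype Ω] (P : Ω → ℝ) (E : Ω → Prop) : ℝ :=
  ∑ ω, if E ω then P ω else 0

/-- Shannon entropy (natural logarithm, with the convention `0 · ln 0 = 0`). -/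
noncomputable def shEnt {Ω α : Type*} [Fintype Ω] [Fintype α] (P : Ω → ℝ) (X : Ω → α) : ℝ :=
  -∑ x, pr P (fun ω => X ω = x) * Real.log (pr P (fun ω => X ω = x))

/-- Mutual information `I(X;S) = H(X) + H(S) − H((X,S))`. -/
noncomputable def mi {Ω α β : Type*} [Fintype Ω] [Fintype α] [Fintype β]
    (P : Ω → ℝ) (X : Ω → α) (S : Ω → β) : ℝ :=
  shEnt P X + shEnt P S - shEnt P (fun ω => (X ω, S ω))
/-!
Write `p x = P(X = x, S = 0)` and `q x = P(X = x, S = 1)`. As `S` is balanced, the disparity is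
`2 ∑_{c x = 1} (p x - q x)`, and since `∑ (p - q) = 0` it is at most `∑ |p - q|`. Cauchy–Schwarz
gives `(∑ |p - q|)² ≤ ∑ (p - q)² / (p + q)`, while `I(X ; S)` is the Jensen–Shannon divergence
`∑ (p log p + q log q - (p + q) log ((p + q) / 2))`, which dominates each term
`(p - q)² / 2(p + q)`: with `p = a (1 + t)`, `q = a (1 - t)` this is
`t² ≤ (1 + t) log (1 + t) + (1 - t) log (1 - t)` for `0 ≤ t ≤ 1`, whose derivative form
`2t ≤ log (1 + t) - log (1 - t)` is read off the series of `artanh`.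
-/

open Real

lemma two_mul_le_log_one_add_sub_log_one_sub {t : ℝ} (h0 : 0 ≤ t) (h1 : t < 1) :
    2 * t ≤ log (1 + t) - log (1 - t) := by
  have hs := hasSum_log_sub_log_of_abs_lt_one (abs_lt.2 ⟨by linarith, h1⟩)
  simpa using sum_le_hasSum (range 1) (fun k _ => by positivity) hs

lemma sq_le_mul_log_one_add_add_mul_log_one_sub {t : ℝ} (h0 : 0 ≤ t) (h1 : t ≤ 1) :
    t ^ 2 ≤ (1 + t) * log (1 + t) + (1 - t) * log (1 - t) := by
  set g : ℝ → ℝ := fun t => (1 + t) * log (1 + t) + (1 - t) * log (1 - t) - t ^ 2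
  have hg : ∀ x ∈ Set.Ioo (0 : ℝ) 1,
      HasDerivAt g (log (1 + x) - log (1 - x) - 2 * x) x := by
    intro x ⟨hx0, hx1⟩
    have hplus := (hasDerivAt_mul_log (by linarith : 1 + x ≠ 0)).comp x
      ((hasDerivAt_id x).const_add 1)
    have hminus := (hasDerivAt_mul_log (by linarith : 1 - x ≠ 0)).comp x
      ((hasDerivAt_id x).const_sub 1)
    exact ((hplus.add hminus).sub (hasDerivAt_pow 2 x)).congr_deriv (by norm_num; ring)
  have hmono : MonotoneOn g (Set.Icc 0 1) := by
    refine monotoneOn_of_deriv_nonneg (convex_Icc 0 1) ?_ ?_ ?_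
    · exact ((continuous_mul_log.comp (continuous_const.add continuous_id)).add
        (continuous_mul_log.comp (continuous_const.sub continuous_id))
        |>.sub (continuous_pow 2)).continuousOn
    · rw [interior_Icc]
      exact fun x hx => (hg x hx).differentiableAt.differentiableWithinAt
    · rw [interior_Icc]
      intro x hx
      rw [(hg x hx).deriv]
      linarith [two_mul_le_log_one_add_sub_log_one_sub hx.1.le hx.2]
  simpa [g] using hmono ⟨le_rfl, zero_le_one⟩ ⟨h0, h1⟩ h0

lemma mul_mul_log_mul (x y : ℝ) : x * y * log (x * y) = y * (x * log x) + x * (y * log y) := by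
  have := negMulLog_mul x y
  simp only [negMulLog] at this
  linarith

lemma sq_sub_div_add_le_two_mul_mul_log {p q : ℝ} (hp : 0 ≤ p) (hq : 0 ≤ q) :
    (p - q) ^ 2 / (p + q) ≤ 2 * (p * log p + q * log q - (p + q) * log ((p + q) / 2)) := by
  wlog hqp : q ≤ p generalizing p q
  · have h := this hq hp (le_of_not_ge hqp)
    rwa [add_comm q p, add_comm (q * log q), ← neg_sub p q, neg_sq] at h
  rcases (add_nonneg hp hq).eq_or_lt with hs | hs
  · obtain ⟨rfl, rfl⟩ : p = 0 ∧ q = 0 := ⟨by linarith, by linarith⟩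
    simp
  obtain ⟨a, t, ha, ht0, ht1, rfl, rfl⟩ : ∃ a t : ℝ, 0 < a ∧ 0 ≤ t ∧ t ≤ 1 ∧
      p = a * (1 + t) ∧ q = a * (1 - t) :=
    ⟨(p + q) / 2, (p - q) / (p + q), by positivity, div_nonneg (by linarith) hs.le,
      (div_le_one hs).2 (by linarith), by field_simp; ring, by field_simp; ring⟩
  have hmid : (a * (1 + t) + a * (1 - t)) / 2 = a := by ring
  calc (a * (1 + t) - a * (1 - t)) ^ 2 / (a * (1 + t) + a * (1 - t))
      = 2 * a * t ^ 2 := by field_simp; ring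
    _ ≤ 2 * a * ((1 + t) * log (1 + t) + (1 - t) * log (1 - t)) := by
      gcongr
      exact sq_le_mul_log_one_add_add_mul_log_one_sub ht0 ht1
    _ = _ := by rw [hmid, mul_mul_log_mul, mul_mul_log_mul]; ring

section JensenShannon

variable {α : Type*} [Fintype α]

/-- The Jensen–Shannon divergence of the distributions `2p` and `2q`, in terms of the
half-weights `p` and `q`. -/
noncomputable def jsDiv (p q : α → ℝ) : ℝ :=
  ∑ x, (p x * log (p x) + q x * log (q x) - (p x + q x) * log ((p x + q x) / 2))

lemma sq_sum_abs_sub_le {p q : α → ℝ} (hp : ∀ x, 0 ≤ p x) (hq : ∀ x, 0 ≤ q x) :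
    (∑ x, |p x - q x|) ^ 2 ≤ (∑ x, (p x - q x) ^ 2 / (p x + q x)) * ∑ x, (p x + q x) := by
  refine sum_sq_le_sum_mul_sum_of_sq_le_mul _
    (fun x _ => div_nonneg (sq_nonneg _) (add_nonneg (hp x) (hq x)))
    (fun x _ => add_nonneg (hp x) (hq x)) (fun x _ => ?_)
  rcases (add_nonneg (hp x) (hq x)).eq_or_lt with hs | hs
  · obtain ⟨h0, h1⟩ : p x = 0 ∧ q x = 0 := by constructor <;> linarith [hp x, hq x]
    simp [h0, h1]
  · rw [div_mul_cancel₀ _ hs.ne', sq_abs]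

lemma sum_abs_sub_le_sqrt_two_mul_jsDiv {p q : α → ℝ} (hp : ∀ x, 0 ≤ p x)
    (hq : ∀ x, 0 ≤ q x) (hpq : ∑ x, (p x + q x) = 1) : ∑ x, |p x - q x| ≤ √(2 * jsDiv p q) := by
  refine le_sqrt_of_sq_le ((sq_sum_abs_sub_le hp hq).trans ?_)
  rw [hpq, mul_one, jsDiv, mul_sum]
  exact sum_le_sum fun x _ => sq_sub_div_add_le_two_mul_mul_log (hp x) (hq x)

end JensenShannon

lemma two_mul_abs_sum_le_sum_abs {α : Type*} [Fintype α] [DecidableEq α] {d : α → ℝ}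
    (hd : ∑ x, d x = 0) (s : Finset α) : 2 * |∑ x ∈ s, d x| ≤ ∑ x, |d x| := by
  have hcompl : ∑ x ∈ sᶜ, d x = -∑ x ∈ s, d x := by
    linarith [sum_add_sum_compl s d]
  calc 2 * |∑ x ∈ s, d x| = |∑ x ∈ s, d x| + |∑ x ∈ sᶜ, d x| := by
        rw [hcompl, abs_neg]; ring
    _ ≤ ∑ x ∈ s, |d x| + ∑ x ∈ sᶜ, |d x| :=
      add_le_add (abs_sum_le_sum_abs _ _) (abs_sum_le_sum_abs _ _)
    _ = ∑ x, |d x| := sum_add_sum_compl s _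

section Probability

variable {Ω α : Type*} [Fintype Ω] [Fintype α] {P : Ω → ℝ}

lemma pr_nonneg (hP : ∀ ω, 0 ≤ P ω) (E : Ω → Prop) : 0 ≤ pr P E :=
  sum_nonneg fun ω _ => by split_ifs <;> simp [hP ω]

lemma sum_pr_and_eq (X : Ω → α) (E : Ω → Prop) :
    ∑ x, pr P (fun ω => X ω = x ∧ E ω) = pr P E := by
  classical
  unfold pr
  rw [sum_comm]
  refine sum_congr rfl fun ω _ => ?_
  by_cases hE : E ω <;> simp [hE]

lemma sum_pr_and_eq' (E : Ω → Prop) (X : Ω → α) :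
    ∑ x, pr P (fun ω => E ω ∧ X ω = x) = pr P E := by
  simpa only [and_comm] using sum_pr_and_eq X E

lemma pr_comp_and_eq_sum (X : Ω → α) (Q : α → Prop) [DecidablePred Q] (E : Ω → Prop) :
    pr P (fun ω => Q (X ω) ∧ E ω) = ∑ x with Q x, pr P (fun ω => X ω = x ∧ E ω) := by
  classical
  unfold pr
  rw [sum_comm]
  refine sum_congr rfl fun ω _ => ?_
  by_cases hE : E ω <;> simp [hE]

lemma mi_eq_jsDiv (X : Ω → α) (S : Ω → Fin 2) (hS0 : pr P (fun ω => S ω = 0) = 1 / 2)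
    (hS1 : pr P (fun ω => S ω = 1) = 1 / 2) :
    mi P X S = jsDiv (fun x => pr P (fun ω => X ω = x ∧ S ω = 0))
      (fun x => pr P (fun ω => X ω = x ∧ S ω = 1)) := by
  set p := fun x => pr P (fun ω => X ω = x ∧ S ω = 0)
  set q := fun x => pr P (fun ω => X ω = x ∧ S ω = 1)
  have hX : ∀ x, pr P (fun ω => X ω = x) = p x + q x := fun x => by
    rw [← sum_pr_and_eq' _ S, Fin.sum_univ_two]
  have hXS : ∀ x s,
      pr P (fun ω => (X ω, S ω) = (x, s)) = pr P (fun ω => X ω = x ∧ S ω = s) :=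
    fun x s => by simp only [Prod.mk.injEq]
  have hS : shEnt P S = log 2 := by
    rw [shEnt, Fin.sum_univ_two, hS0, hS1, one_div, log_inv]; ring
  have htot : ∑ x, (p x + q x) = 1 := by
    rw [sum_add_distrib, sum_pr_and_eq, sum_pr_and_eq, hS0, hS1]; norm_num
  have hmid : ∀ x, (p x + q x) * log ((p x + q x) / 2)
      = (p x + q x) * log (p x + q x) - (p x + q x) * log 2 := by
    intro x
    rcases eq_or_ne (p x + q x) 0 with h | h
    · simp [h]
    · rw [log_div h two_ne_zero]; ring
  rw [mi, hS, shEnt, shEnt, Fintype.sum_prod_type, jsDiv]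
  simp only [hX, hXS, Fin.sum_univ_two, hmid]
  simp only [sum_sub_distrib, sum_add_distrib, ← sum_mul, htot]
  ring

end Probability

theorem stmt6_general {Ω α : Type*} [Fintype Ω] [Fintype α]
    (P : Ω → ℝ) (hP0 : ∀ ω, 0 ≤ P ω)
    (S : Ω → Fin 2) (X : Ω → α)
    (hS0 : pr P (fun ω => S ω = 0) = 1 / 2) (hS1 : pr P (fun ω => S ω = 1) = 1 / 2)
    (c : α → Fin 2) :
    |pr P (fun ω => c (X ω) = 1 ∧ S ω = 0) / pr P (fun ω => S ω = 0)
        - pr P (fun ω => c (X ω) = 1 ∧ S ω = 1) / pr P (fun ω => S ω = 1)| ≤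
      Real.sqrt (2 * mi P X S) := by
  classical
  set p := fun x => pr P (fun ω => X ω = x ∧ S ω = 0)
  set q := fun x => pr P (fun ω => X ω = x ∧ S ω = 1)
  have hp : ∀ x, 0 ≤ p x := fun x => pr_nonneg hP0 _
  have hq : ∀ x, 0 ≤ q x := fun x => pr_nonneg hP0 _
  have hp_sum : ∑ x, p x = 1 / 2 := by rw [sum_pr_and_eq, hS0]
  have hq_sum : ∑ x, q x = 1 / 2 := by rw [sum_pr_and_eq, hS1]
  have hdisparity : pr P (fun ω => c (X ω) = 1 ∧ S ω = 0) / pr P (fun ω => S ω = 0)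
      - pr P (fun ω => c (X ω) = 1 ∧ S ω = 1) / pr P (fun ω => S ω = 1)
      = 2 * ∑ x with c x = 1, (p x - q x) := by
    rw [hS0, hS1, pr_comp_and_eq_sum X (fun a => c a = 1), pr_comp_and_eq_sum X (fun a => c a = 1),
      sum_sub_distrib]
    ring
  calc _ = 2 * |∑ x with c x = 1, (p x - q x)| := by rw [hdisparity, abs_mul, abs_two]
    _ ≤ ∑ x, |p x - q x| :=
      two_mul_abs_sum_le_sum_abs (by rw [sum_sub_distrib, hp_sum, hq_sum, sub_self]) _
    _ ≤ √(2 * jsDiv p q) := sum_abs_sub_le_sqrt_two_mul_jsDiv hp hq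
      (by rw [sum_add_distrib, hp_sum, hq_sum]; norm_num)
    _ = √(2 * mi P X S) := by rw [mi_eq_jsDiv X S hS0 hS1]

/-- for a balanced binary `S`, the demographic disparity of any classifier
`c` applied to `X` is bounded by `√(2·I(X;S))`. -/
theorem stmt6 {Ω α : Type*} [Fintype Ω] [Fintype α]
    (P : Ω → ℝ) (hP0 : ∀ ω, 0 ≤ P ω) (hP1 : ∑ ω, P ω = 1)
    (S : Ω → Fin 2) (X : Ω → α)
    (hS0 : pr P (fun ω => S ω = 0) = 1 / 2) (hS1 : pr P (fun ω => S ω = 1) = 1 / 2)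
    (c : α → Fin 2) :
    |pr P (fun ω => c (X ω) = 1 ∧ S ω = 0) / pr P (fun ω => S ω = 0)
        - pr P (fun ω => c (X ω) = 1 ∧ S ω = 1) / pr P (fun ω => S ω = 1)| ≤
      Real.sqrt (2 * mi P X S) :=
  stmt6_general P hP0 S X hS0 hS1 c
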